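/- Consider the linear schema S given by: while p(w) { w := g(w); v := f(u); if q(w,t) then u := h(u); t := H(t); }, and the executable terminating path ρ = (⟨p,true⟩⟨g⟩⟨f⟩⟨q,true⟩⟨h⟩⟨H⟩)² ⟨p,false⟩, which passes twice through the body of p, each time through ⟨q,true⟩. Then (1) the only (ρ,{v})-path-faithful dynamic end slice of S is S itself, and (2) the quotient T obtained from S by deleting the assignment t := H(t); is a non-trivial (ρ,{v})-dynamic end slice of S. Hence a dynamic slice of a linear schema may be strictly smaller than every path-faithful dynamic slice. -/

import Mathlib

namespace SchemaSlicing

/- Function symbols, predicate symbols, variables and labels are drawn from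
   fixed infinite sets; we model each by ℕ. Arities are implicit: each
   occurrence of a symbol carries the list of its arguments. -/
abbrev Var := ℕ
abbrev Fn := ℕ
abbrev Pn := ℕ
abbrev Label := ℕ

/-- Structured program schemas. `loop` is the while-construct. -/
inductive Schema : Type where
  | skip : Schema
  | label : Label → Schema
  | assign : Var → Fn → List Var → Schema
  | seq : Schema → Schema → Schema
  | ite : Pn → List Var → Schema → Schema → Schema
  | loop : Pn → List Var → Schema → Schema
  deriving DecidableEq

/-- Letters of the alphabet L(S): labels, assignment letters ⟨y:=f(x)⟩ and
    predicate letters ⟨p(x),Z⟩. -/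
inductive Letter : Type where
  | lab : Label → Letter
  | asgn : Var → Fn → List Var → Letter
  | pred : Pn → List Var → Bool → Letter
  deriving DecidableEq

/-- Symbols: function symbols, predicate symbols and labels. -/
inductive Sym : Type where
  | fn : Fn → Sym
  | pn : Pn → Sym
  | lab : Label → Sym
  deriving DecidableEq

/-- The list of occurrences of function symbols, predicate symbols and labels in a schema. -/
def Schema.syms : Schema → List Sym
  | .skip => []
  | .label l => [Sym.lab l]
  | .assign _ f _ => [Sym.fn f]
  | .seq S₁ S₂ => S₁.syms ++ S₂.syms
  | .ite p _ S₁ S₂ => Sym.pn p :: (S₁.syms ++ S₂.syms)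
  | .loop q _ T => Sym.pn q :: T.syms

/-- A schema is linear if no function symbol, predicate symbol or label occurs
    more than once in it. -/
def Schema.Linear (S : Schema) : Prop := S.syms.Nodup

/-- Π(S), the set of terminating paths through S. -/
inductive Paths : Schema → List Letter → Prop where
  | skip : Paths Schema.skip []
  | label (l : Label) : Paths (Schema.label l) [Letter.lab l]
  | assign (y : Var) (f : Fn) (xs : List Var) :
      Paths (Schema.assign y f xs) [Letter.asgn y f xs]
  | seq {S₁ S₂ w₁ w₂} : Paths S₁ w₁ → Paths S₂ w₂ → Paths (Schema.seq S₁ S₂) (w₁ ++ w₂)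
  | iteTrue {p xs S₁ S₂ w} : Paths S₁ w →
      Paths (Schema.ite p xs S₁ S₂) (Letter.pred p xs true :: w)
  | iteFalse {p xs S₁ S₂ w} : Paths S₂ w →
      Paths (Schema.ite p xs S₁ S₂) (Letter.pred p xs false :: w)
  | loopFalse (q : Pn) (xs : List Var) (T : Schema) :
      Paths (Schema.loop q xs T) [Letter.pred q xs false]
  | loopTrue {q xs T w ws} : Paths T w → Paths (Schema.loop q xs T) ws →
      Paths (Schema.loop q xs T) (Letter.pred q xs true :: (w ++ ws))

/-- ρ ∈ pre(Π(S)): ρ is a (finite) path through S.  (Every finite path through S,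
    including every finite prefix of an infinite path, is a prefix of a terminating path.) -/
def PathPrefix (S : Schema) (ρ : List Letter) : Prop := ∃ τ, Paths S τ ∧ ρ <+: τ

/-- `IsQuotient S' S`: S' is obtained from S by deleting zero or more statements. -/
inductive IsQuotient : Schema → Schema → Prop where
  | skip (S : Schema) : IsQuotient Schema.skip S
  | refl (S : Schema) : IsQuotient S S
  | seq {S₁' S₁ S₂' S₂} : IsQuotient S₁' S₁ → IsQuotient S₂' S₂ →
      IsQuotient (Schema.seq S₁' S₂') (Schema.seq S₁ S₂)
  | loop {q xs T' T} : IsQuotient T' T → IsQuotient (Schema.loop q xs T') (Schema.loop q xs T)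
  | ite {p xs T₁ S₁ T₂ S₂} : IsQuotient T₁ S₁ → IsQuotient T₂ S₂ →
      IsQuotient (Schema.ite p xs T₁ T₂) (Schema.ite p xs S₁ S₂)

/-- The symbol (function symbol, predicate symbol or label) of a letter. -/
def Letter.sym : Letter → Sym
  | .lab l => Sym.lab l
  | .asgn _ f _ => Sym.fn f
  | .pred p _ _ => Sym.pn p

/-- proj_{S'}(ρ): delete from ρ all letters whose function or predicate symbols,
    or labels, do not occur in S'. -/
def proj (S' : Schema) (ρ : List Letter) : List Letter :=
  ρ.filter (fun m => decide (m.sym ∈ S'.syms))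

/-- An interpretation over a domain D. -/
structure Interp (D : Type) where
  fn : Fn → List D → D
  pn : Pn → List D → Bool

/-- One execution step on (non-⊥) states; predicate letters and labels do not change the state. -/
def execLetter {D : Type} (i : Interp D) (d : Var → D) : Letter → (Var → D)
  | .asgn y f xs => Function.update d y (i.fn f (xs.map d))
  | _ => d

/-- M[schema(σ)]^i_d : the state after executing the assignments of the word σ from d. -/
def execWord {D : Type} (i : Interp D) (d : Var → D) (σ : List Letter) : Var → D :=
  σ.foldl (execLetter i) d

/-- ρ is consistent with (i,d): every predicate letter in ρ is evaluated by i in accordance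
    with the sequence of assignments preceding it. -/
def Consistent {D : Type} (i : Interp D) (d : Var → D) (ρ : List Letter) : Prop :=
  ∀ σ p xs Z, (σ ++ [Letter.pred p xs Z]) <+: ρ → i.pn p (xs.map (execWord i d σ)) = Z

/-- `ρ` is a finite prefix of the path π(S,i,d). -/
def PrefixOfPi {D : Type} (i : Interp D) (d : Var → D) (S : Schema) (ρ : List Letter) : Prop :=
  PathPrefix S ρ ∧ Consistent i d ρ

/-- The set of finite prefixes of π(S,i,d); this set determines the
    (possibly infinite) word π(S,i,d) uniquely. -/
def PiPrefixes {D : Type} (i : Interp D) (d : Var → D) (S : Schema) : Set (List Letter) :=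
  {ρ | PrefixOfPi i d S ρ}

open Classical in
/-- The final state M[S]^i_d; `none` represents ⊥ (non-termination). -/
noncomputable def finalState {D : Type} (i : Interp D) (d : Var → D) (S : Schema) :
    Option (Var → D) :=
  if h : ∃ ρ, Paths S ρ ∧ Consistent i d ρ then some (execWord i d h.choose) else none

/-- The Herbrand domain Term(F,V). -/
inductive Tm : Type where
  | var : Var → Tm
  | app : Fn → List Tm → Tm

/-- A Herbrand interpretation: function symbols act as term constructors. -/
def Interp.IsHerbrand (j : Interp Tm) : Prop := ∀ f ts, j.fn f ts = Tm.app f ts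

/-- The natural state e. -/
def natState : Var → Tm := Tm.var

/-- A fixed Herbrand interpretation (the predicate part is irrelevant for executing
    assignments). -/
def hInterp : Interp Tm := ⟨fun f ts => Tm.app f ts, fun _ _ => true⟩

/-- M[σ]_e : the Herbrand state after executing the assignments of σ from the natural state. -/
def hExec (σ : List Letter) : Var → Tm := execWord hInterp natState σ

/-- p(t) = Y is a consequence of μ. -/
def Consequence (μ : List Letter) (p : Pn) (ts : List Tm) (Y : Bool) : Prop :=
  ∃ μ' xs, (μ' ++ [Letter.pred p xs Y]) <+: μ ∧ xs.map (hExec μ') = ts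

/-- ρ is executable: ρ is a prefix of π(S,i,d) for some domain, interpretation and state. -/
def Executable (S : Schema) (ρ : List Letter) : Prop :=
  ∃ (D : Type) (i : Interp D) (d : Var → D), PrefixOfPi i d S ρ

/-- ρ (through S) and ρ' (through S') are compatible: for some domain, interpretation i
    and state d they are prefixes of π(S,i,d) and π(S',i,d) respectively. -/
def Compatible (S : Schema) (ρ : List Letter) (S' : Schema) (ρ' : List Letter) : Prop :=
  ∃ (D : Type) (i : Interp D) (d : Var → D), PrefixOfPi i d S ρ ∧ PrefixOfPi i d S' ρ'

/-- `Sub T S`: T occurs as a subschema of S. -/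
inductive Sub : Schema → Schema → Prop where
  | refl (S : Schema) : Sub S S
  | seqL {T S₁ S₂} : Sub T S₁ → Sub T (Schema.seq S₁ S₂)
  | seqR {T S₁ S₂} : Sub T S₂ → Sub T (Schema.seq S₁ S₂)
  | iteT {T p xs S₁ S₂} : Sub T S₁ → Sub T (Schema.ite p xs S₁ S₂)
  | iteF {T p xs S₁ S₂} : Sub T S₂ → Sub T (Schema.ite p xs S₁ S₂)
  | loop {T q xs B} : Sub T B → Sub T (Schema.loop q xs B)

/-- Simple l-reductions of paths through S. -/
inductive SimpleRed (S : Schema) (l : Label) : List Letter → List Letter → Prop where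
  | loopRed {p xs B σ α γ} :
      Sub (Schema.loop p xs B) S → Paths B σ → Sym.lab l ∉ B.syms →
      SimpleRed S l (α ++ [Letter.pred p xs true] ++ σ ++ [Letter.pred p xs false] ++ γ)
                    (α ++ [Letter.pred p xs false] ++ γ)
  | iteRed {p xs S₁ S₂ σ α γ} {Z : Bool} :
      Sub (Schema.ite p xs S₁ S₂) S → Paths (if Z then S₁ else S₂) σ →
      (if Z then S₂ else S₁) = Schema.skip →
      Sym.lab l ∉ S₁.syms → Sym.lab l ∉ S₂.syms →
      SimpleRed S l (α ++ [Letter.pred p xs Z] ++ σ ++ γ)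
                    (α ++ [Letter.pred p xs (!Z)] ++ γ)

/-- ρ is l-reducible to ρ': zero or more simple l-reductions. -/
def Reducible (S : Schema) (l : Label) : List Letter → List Letter → Prop :=
  Relation.ReflTransGen (SimpleRed S l)

/-- maxpre(σ,σ') : the maximal common prefix of two words. -/
def maxpre : List Letter → List Letter → List Letter
  | a :: as, b :: bs => if a = b then a :: maxpre as bs else []
  | _, _ => []

/-- The sequence of function and predicate symbols through which a path passes. -/
def symSeq (ρ : List Letter) : List Sym :=
  ρ.filterMap fun m => match m with
    | Letter.asgn _ f _ => some (Sym.fn f)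
    | Letter.pred p _ _ => some (Sym.pn p)
    | Letter.lab _ => none

/-- S' (a quotient of S containing l) is a (ρl,V)-path-faithful dynamic slice of S:
    (1) every variable of V defines the same term after proj_{S'}(ρ) as after ρ, and
    (2) every maximal path through S' compatible with ρ has proj_{S'}(ρ) as a prefix
        (equivalently: whenever ρ is a prefix of π(S,i,d), proj_{S'}(ρ) is a prefix
        of π(S',i,d)). -/
def IsPFDS (S : Schema) (ρ : List Letter) (l : Label) (V : Set Var) (S' : Schema) : Prop :=
  (∀ v ∈ V, hExec (proj S' ρ) v = hExec ρ v) ∧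
  ∀ (D : Type) (i : Interp D) (d : Var → D),
    PrefixOfPi i d S ρ → PrefixOfPi i d S' (proj S' ρ)

/-- S' (a quotient of S containing l) is a (ρl,V)-dynamic slice of S: every maximal path
    through S' compatible with ρ has a prefix ρ' to which proj_{S'}(ρ) is l-reducible and
    such that every variable of V defines the same term after ρ' as after ρ. -/
def IsDS (S : Schema) (ρ : List Letter) (l : Label) (V : Set Var) (S' : Schema) : Prop :=
  ∀ (D : Type) (i : Interp D) (d : Var → D), PrefixOfPi i d S ρ →
    ∃ ρ', PrefixOfPi i d S' ρ' ∧ Reducible S' l (proj S' ρ) ρ' ∧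
      ∀ v ∈ V, hExec ρ' v = hExec ρ v

/-- T' is a (ρ,V)-path-faithful dynamic end slice of T
    (S = T l with a label l at the end, S' = T' l). -/
def IsPFDSEnd (T : Schema) (ρ : List Letter) (V : Set Var) (T' : Schema) : Prop :=
  IsPFDS (Schema.seq T (Schema.label 0)) ρ 0 V (Schema.seq T' (Schema.label 0))

/-- T' is a (ρ,V)-dynamic end slice of T. -/
def IsDSEnd (T : Schema) (ρ : List Letter) (V : Set Var) (T' : Schema) : Prop :=
  IsDS (Schema.seq T (Schema.label 0)) ρ 0 V (Schema.seq T' (Schema.label 0))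

/-- The set of function and predicate symbols of a schema. -/
def fpsyms (T : Schema) : Set Sym := {s | s ∈ T.syms ∧ ∀ l : Label, s ≠ Sym.lab l}

/-- T is a minimal (ρ,V)-path-faithful dynamic end slice of S: it is a path-faithful
    dynamic end slice, and no quotient of S with a strictly smaller set of function and
    predicate symbols is a (ρ,V)-dynamic end slice of S. -/
def MinimalPFDSEnd (S : Schema) (ρ : List Letter) (V : Set Var) (T : Schema) : Prop :=
  IsPFDSEnd S ρ V T ∧
  ∀ T', IsQuotient T' S → fpsyms T' ⊂ fpsyms T → ¬ IsDSEnd S ρ V T'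

/- The schema of Figure 3 of the paper.
   Variables: w = 0, v = 1, u = 2, t = 3.
   Function symbols: g = 0, f = 1, h = 2, H = 3.
   Predicate symbols: p = 0, q = 1. -/

/-- Body of the while loop: w := g(w); v := f(u); if q(w,t) then u := h(u); t := H(t); -/
def figure3Body : Schema :=
  Schema.seq (Schema.assign 0 0 [0])
    (Schema.seq (Schema.assign 1 1 [2])
      (Schema.seq (Schema.ite 1 [0, 3] (Schema.assign 2 2 [2]) Schema.skip)
        (Schema.assign 3 3 [3])))

/-- S: while p(w) { w := g(w); v := f(u); if q(w,t) then u := h(u); t := H(t); } -/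
def figure3S : Schema := Schema.loop 0 [0] figure3Body

/-- The quotient T of S obtained by deleting the assignment t := H(t); -/
def figure3T : Schema :=
  Schema.loop 0 [0]
    (Schema.seq (Schema.assign 0 0 [0])
      (Schema.seq (Schema.assign 1 1 [2])
        (Schema.seq (Schema.ite 1 [0, 3] (Schema.assign 2 2 [2]) Schema.skip)
          Schema.skip)))

/-- One pass of ρ through the body: ⟨p,true⟩⟨g⟩⟨f⟩⟨q,true⟩⟨h⟩⟨H⟩ -/
def figure3Pass : List Letter :=
  [Letter.pred 0 [0] true, Letter.asgn 0 0 [0], Letter.asgn 1 1 [2],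
   Letter.pred 1 [0, 3] true, Letter.asgn 2 2 [2], Letter.asgn 3 3 [3]]

/-- ρ = (⟨p,true⟩⟨g⟩⟨f⟩⟨q,true⟩⟨h⟩⟨H⟩)² ⟨p,false⟩ -/
def figure3Rho : List Letter := figure3Pass ++ figure3Pass ++ [Letter.pred 0 [0] false]

/-!
Path-faithfulness forces every statement of S into the slice.  The final value f(h(u)) of v
mentions f and h, so v := f(u) and u := h(u) stay.  For the two remaining assignments, take the
Herbrand interpretation `figure3Witness` in which p fails only at g(g(w)) and q holds exactly
when its first argument is g(w) or its second is H(t): it follows ρ through S, but without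
w := g(w) the projection of ρ would need p(w) to fail, and without t := H(t) it would need
q(g(g(w)), t) to hold.  Since S has finitely many quotients, a finite check finishes (1).

For (2), deleting t := H(t) only affects the second test of q.  If it succeeds, T follows the
projection of ρ; if not, T follows the l-reduct that skips the second u := h(u), and v := f(u)
was executed before that test, so v still ends as f(h(u)).
-/

section Consistency

variable {D : Type} (i : Interp D)

def isConsistent (d : Var → D) : List Letter → Bool
  | [] => true
  | Letter.pred p xs Z :: ρ => (i.pn p (xs.map d) == Z) && isConsistent d ρ
  | m :: ρ => isConsistent (execLetter i d m) ρ

theorem consistent_nil (d : Var → D) : Consistent i d [] := by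
  intro σ p xs Z h
  simpa using h.length_le

theorem consistent_cons_iff (d : Var → D) (m : Letter) (ρ : List Letter) :
    Consistent i d (m :: ρ) ↔
      (∀ p xs Z, m = Letter.pred p xs Z → i.pn p (xs.map d) = Z) ∧
        Consistent i (execLetter i d m) ρ := by
  constructor
  · intro h
    refine ⟨?_, fun σ p xs Z hσ ↦ ?_⟩
    · rintro p xs Z rfl
      simpa [execWord] using h [] p xs Z ⟨ρ, rfl⟩
    · simpa [execWord] using h (m :: σ) p xs Z (List.cons_prefix_cons.mpr ⟨rfl, hσ⟩)
  · rintro ⟨hm, hρ⟩ (_ | ⟨a, σ⟩) p xs Z hσ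
    · obtain ⟨rfl, -⟩ := List.cons_prefix_cons.mp hσ
      simpa [execWord] using hm p xs Z rfl
    · obtain ⟨rfl, hσρ⟩ := List.cons_prefix_cons.mp hσ
      simpa [execWord] using hρ σ p xs Z hσρ

theorem consistent_iff_isConsistent (ρ : List Letter) (d : Var → D) :
    Consistent i d ρ ↔ isConsistent i d ρ = true := by
  induction ρ generalizing d with
  | nil => simpa [isConsistent] using consistent_nil i d
  | cons m ρ ih =>
    cases m <;> simp [isConsistent, consistent_cons_iff, ih, execLetter, and_comm]

instance (d : Var → D) (ρ : List Letter) : Decidable (Consistent i d ρ) :=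
  decidable_of_iff _ (consistent_iff_isConsistent i ρ d).symm

end Consistency

def Schema.quotients : Schema → List Schema
  | .seq S₁ S₂ => .skip :: (S₁.quotients ×ˢ S₂.quotients).map fun T ↦ .seq T.1 T.2
  | .ite p xs S₁ S₂ =>
    .skip :: (S₁.quotients ×ˢ S₂.quotients).map fun T ↦ .ite p xs T.1 T.2
  | .loop q xs B => .skip :: B.quotients.map (.loop q xs)
  | S => [.skip, S]

theorem Schema.mem_quotients_self (S : Schema) : S ∈ S.quotients := by
  induction S <;> simp_all [Schema.quotients]

theorem IsQuotient.mem_quotients {T S : Schema} (h : IsQuotient T S) : T ∈ S.quotients := by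
  induction h with
  | skip S => cases S <;> simp [Schema.quotients]
  | refl S => exact S.mem_quotients_self
  | seq _ _ ih₁ ih₂ => simp [Schema.quotients, ih₁, ih₂]
  | loop _ ih => simp [Schema.quotients, ih]
  | ite _ _ ih₁ ih₂ => simp [Schema.quotients, ih₁, ih₂]

inductive Tm.Mentions : Tm → Fn → Prop where
  | head (f : Fn) (ts : List Tm) : Tm.Mentions (.app f ts) f
  | arg {f g : Fn} {t : Tm} {ts : List Tm} :
      t ∈ ts → Tm.Mentions t f → Tm.Mentions (.app g ts) f

theorem mentions_execWord {j : Interp Tm} (hj : j.IsHerbrand) {f : Fn} (σ : List Letter)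
    (d : Var → Tm) (v : Var) (h : (execWord j d σ v).Mentions f) :
    (∃ x, (d x).Mentions f) ∨ ∃ y xs, Letter.asgn y f xs ∈ σ := by
  induction σ generalizing d with
  | nil => exact .inl ⟨v, h⟩
  | cons m σ ih =>
    rcases ih _ h with ⟨x, hx⟩ | ⟨y, xs, hσ⟩
    · cases m with
      | asgn y g xs =>
        by_cases hxy : x = y
        · subst hxy
          simp only [execLetter, Function.update_self] at hx
          rw [hj] at hx
          cases hx with
          | head => exact .inr ⟨x, xs, List.mem_cons_self⟩
          | arg ht hm =>
            obtain ⟨z, -, rfl⟩ := List.mem_map.mp ht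
            exact .inl ⟨z, hm⟩
        · exact .inl ⟨x, by simpa [execLetter, hxy] using hx⟩
      | _ => exact .inl ⟨x, hx⟩
    · exact .inr ⟨y, xs, List.mem_cons_of_mem _ hσ⟩

theorem exists_asgn_mem_of_mentions_hExec {f : Fn} {σ : List Letter} {v : Var}
    (h : (hExec σ v).Mentions f) : ∃ y xs, Letter.asgn y f xs ∈ σ :=
  (mentions_execWord (fun _ _ ↦ rfl) σ natState v h).resolve_left fun ⟨_, hx⟩ ↦ nomatch hx

theorem fn_mem_syms_of_mentions_hExec_proj {S : Schema} {ρ : List Letter} {f : Fn} {v : Var}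
    (h : (hExec (proj S ρ) v).Mentions f) : Sym.fn f ∈ S.syms := by
  obtain ⟨y, xs, hm⟩ := exists_asgn_mem_of_mentions_hExec h
  exact of_decide_eq_true (List.mem_filter.mp hm).2

theorem paths_loop_two {q : Pn} {xs : List Var} {B : Schema} {w₁ w₂ : List Letter}
    (h₁ : Paths B w₁) (h₂ : Paths B w₂) :
    Paths (.loop q xs B)
      ((.pred q xs true :: w₁) ++ (.pred q xs true :: w₂) ++ [.pred q xs false]) := by
  simpa using h₁.loopTrue (h₂.loopTrue (.loopFalse q xs B))

theorem paths_figure3Body :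
    Paths figure3Body
      [.asgn 0 0 [0], .asgn 1 1 [2], .pred 1 [0, 3] true, .asgn 2 2 [2], .asgn 3 3 [3]] :=
  have h := (Paths.assign 0 0 [0]).seq <| (Paths.assign 1 1 [2]).seq <|
    (Paths.iteTrue (S₂ := .skip) (p := 1) (xs := [0, 3]) (.assign 2 2 [2])).seq (.assign 3 3 [3])
  h

theorem paths_figure3S_figure3Rho : Paths figure3S figure3Rho :=
  paths_loop_two paths_figure3Body paths_figure3Body

def figure3Witness : Interp Tm where
  fn := Tm.app
  pn
    | 0, [.app 0 [.app 0 [.var 0]]] => false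
    | 0, _ => true
    | _, [.app 0 [.var 0], _] => true
    | _, [_, .app 3 [.var 3]] => true
    | _, _ => false

theorem eq_figure3S_of_mem_quotients :
    ∀ T ∈ figure3S.quotients, Sym.fn 1 ∈ T.syms → Sym.fn 2 ∈ T.syms →
      Consistent figure3Witness natState (proj (.seq T (.label 0)) figure3Rho) →
        T = figure3S := by
  decide

def figure3PassT : List Letter :=
  [.pred 0 [0] true, .asgn 0 0 [0], .asgn 1 1 [2], .pred 1 [0, 3] true, .asgn 2 2 [2]]

def figure3PassTElse : List Letter :=
  [.pred 0 [0] true, .asgn 0 0 [0], .asgn 1 1 [2], .pred 1 [0, 3] false]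

theorem proj_figure3T_figure3Rho :
    proj (.seq figure3T (.label 0)) figure3Rho =
      figure3PassT ++ figure3PassT ++ [.pred 0 [0] false] := by
  decide

theorem consistent_figure3T {D : Type} {i : Interp D} {d : Var → D}
    (h : Consistent i d figure3Rho) :
    Consistent i d (figure3PassT ++ figure3PassT ++ [.pred 0 [0] false]) ∨
      Consistent i d (figure3PassT ++ figure3PassTElse ++ [.pred 0 [0] false]) := by
  -- Only the second test of q sees a different argument (t instead of H(t)); it is true or false.
  simp only [consistent_iff_isConsistent] at h ⊢
  simp_all [figure3Rho, figure3Pass, figure3PassT, figure3PassTElse, isConsistent, execLetter]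

theorem paths_figure3T :
    Paths figure3T (figure3PassT ++ figure3PassT ++ [.pred 0 [0] false]) :=
  have h := (Paths.assign 0 0 [0]).seq <| (Paths.assign 1 1 [2]).seq <|
    (Paths.iteTrue (S₂ := .skip) (p := 1) (xs := [0, 3]) (.assign 2 2 [2])).seq .skip
  paths_loop_two h h

theorem paths_figure3T_reduced :
    Paths figure3T (figure3PassT ++ figure3PassTElse ++ [.pred 0 [0] false]) :=
  have h := (Paths.assign 0 0 [0]).seq <| (Paths.assign 1 1 [2]).seq <|
    (Paths.iteTrue (S₂ := .skip) (p := 1) (xs := [0, 3]) (.assign 2 2 [2])).seq .skip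
  have h' := (Paths.assign 0 0 [0]).seq <| (Paths.assign 1 1 [2]).seq <|
    (Paths.iteFalse (S₁ := .assign 2 2 [2]) (p := 1) (xs := [0, 3]) .skip).seq .skip
  paths_loop_two h h'

theorem simpleRed_figure3T :
    SimpleRed (.seq figure3T (.label 0)) 0
      (figure3PassT ++ figure3PassT ++ [.pred 0 [0] false])
      (figure3PassT ++ figure3PassTElse ++ [.pred 0 [0] false]) :=
  have h := SimpleRed.iteRed (S := .seq figure3T (.label 0)) (l := 0) (Z := true)
    (α := figure3PassT ++ figure3PassTElse.dropLast) (σ := [.asgn 2 2 [2]])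
    (γ := [.pred 0 [0] false]) (.seqL <| .loop <| .seqR <| .seqR <| .seqL <| .refl _)
    (.assign 2 2 [2]) rfl (by decide) (by decide)
  h

theorem prefixOfPi_seq_label {D : Type} {i : Interp D} {d : Var → D} {S : Schema}
    {ρ : List Letter} (l : Label) (hS : Paths S ρ) (hρ : Consistent i d ρ) :
    PrefixOfPi i d (.seq S (.label l)) ρ :=
  ⟨⟨_, hS.seq (.label l), List.prefix_append _ _⟩, hρ⟩

theorem eq_figure3S_of_isPFDSEnd {T : Schema} (hT : IsQuotient T figure3S)
    (h : IsPFDSEnd figure3S figure3Rho {1} T) : T = figure3S := by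
  obtain ⟨hV, hπ⟩ := h
  have hv : hExec (proj (.seq T (.label 0)) figure3Rho) 1 = .app 1 [.app 2 [.var 2]] := hV 1 rfl
  have mem_syms {f : Fn} (hf : (Tm.app 1 [.app 2 [.var 2]]).Mentions f) : Sym.fn f ∈ T.syms := by
    simpa [Schema.syms] using fn_mem_syms_of_mentions_hExec_proj (hv ▸ hf :
      (hExec (proj (.seq T (.label 0)) figure3Rho) 1).Mentions f)
  exact eq_figure3S_of_mem_quotients T hT.mem_quotients (mem_syms (.head _ _))
    (mem_syms (.arg (List.mem_singleton_self _) (.head _ _)))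
    (hπ _ _ _ (prefixOfPi_seq_label 0 paths_figure3S_figure3Rho (by decide))).2

theorem isDSEnd_figure3T : IsDSEnd figure3S figure3Rho {1} figure3T := by
  rintro D i d ⟨-, hρ⟩
  rw [proj_figure3T_figure3Rho]
  rcases consistent_figure3T hρ with h | h
  · exact ⟨_, prefixOfPi_seq_label 0 paths_figure3T h, .refl, by rintro v rfl; rfl⟩
  · exact ⟨_, prefixOfPi_seq_label 0 paths_figure3T_reduced h, .single simpleRed_figure3T,
      by rintro v rfl; rfl⟩

/-- for the schema S of Figure 3 and the path ρ above (an executable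
    terminating path through S), (1) the only (ρ,{v})-path-faithful dynamic end slice of S
    is S itself, while (2) the quotient T obtained by deleting t := H(t); is a non-trivial
    (ρ,{v})-dynamic end slice of S.  Hence a dynamic slice of a linear schema may be
    strictly smaller than every path-faithful dynamic slice. -/
theorem statement_15 :
    figure3S.Linear ∧
    Paths figure3S figure3Rho ∧
    Executable figure3S figure3Rho ∧
    (∀ T', IsQuotient T' figure3S → IsPFDSEnd figure3S figure3Rho {1} T' →
      T' = figure3S) ∧
    (IsQuotient figure3T figure3S ∧ figure3T ≠ figure3S ∧
      IsDSEnd figure3S figure3Rho {1} figure3T) := by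
  refine ⟨show figure3S.syms.Nodup by decide, paths_figure3S_figure3Rho, ?_,
    fun _ ↦ eq_figure3S_of_isPFDSEnd, ?_, by decide, isDSEnd_figure3T⟩
  · exact ⟨Tm, figure3Witness, natState, ⟨_, paths_figure3S_figure3Rho, List.prefix_rfl⟩,
      by decide⟩
  · exact .loop <| .seq (.refl _) <| .seq (.refl _) <| .seq (.refl _) (.skip _)

end SchemaSlicing
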